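/- Eigenvalue property of second-order critical points: Let d ≥ 2 and let G ∈ O(d)^{⊗n} be a second-order critical point of (QP). Then for each i ∈ [n], the matrix C_iᵀ G G_iᵀ − C_{ii} is symmetric and the sum of its two smallest eigenvalues is nonnegative, i.e. λ_{d−1}(C_iᵀ G G_iᵀ − C_{ii}) + λ_d(C_iᵀ G G_iᵀ − C_{ii}) ≥ 0, where λ_1 ≥ … ≥ λ_d are the eigenvalues in decreasing order. -/

import Mathlib

/-!
At a second-order critical point `G`, the diagonal block `Mᵢ := S(G)ᵢᵢ` equals
`Cᵢᵀ G Gᵢᵀ − Cᵢᵢ`: the first-order condition `S(G) G = 0` on block `i` gives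
`symblockdiag(C G Gᵀ)ᵢᵢ Gᵢ = Cᵢᵀ G`, and `Gᵢ Gᵢᵀ = 1`. In particular `Mᵢ` is symmetric. For
orthonormal eigenvectors `u, v` of `Mᵢ` with eigenvalues `λ, μ`, the skew matrix
`A = u vᵀ − v uᵀ` gives the tangent direction `H` supported on block `i` with `Hᵢ = A Gᵢ`,
and `⟨H, S(G) H⟩ = tr (Aᵀ Mᵢ A) = λ + μ`, which second-order criticality makes nonnegative.
-/

open Matrix BigOperators

noncomputable section
namespace GroupSync

variable {n d : ℕ}

/-- Frobenius norm of a real matrix. -/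
def frob {m k : Type*} [Fintype m] [Fintype k] (X : Matrix m k ℝ) : ℝ :=
  Real.sqrt (∑ i, ∑ j, (X i j) ^ 2)

/-- Spectral (operator) norm of a real matrix: the operator norm of the induced
linear map between Euclidean spaces. -/
def spec {m k : Type*} [Fintype m] [Fintype k] [DecidableEq k] (X : Matrix m k ℝ) : ℝ :=
  ‖LinearMap.toContinuousLinearMap (Matrix.toEuclideanLin X)‖

/-- Nuclear norm: trace of the positive semidefinite square root of `X * Xᵀ`
(i.e. the sum of the singular values of `X`). -/
def nuclear {m k : Type*} [Fintype m] [Fintype k] [DecidableEq m] (X : Matrix m k ℝ) : ℝ :=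
  ((Matrix.posSemidef_self_mul_conjTranspose X).1.eigenvectorUnitary.1 *
    diagonal ((RCLike.ofReal : ℝ → ℝ) ∘ (√·) ∘ (Matrix.posSemidef_self_mul_conjTranspose X).1.eigenvalues) *
    (star (Matrix.posSemidef_self_mul_conjTranspose X).1.eigenvectorUnitary : Matrix m m ℝ)).trace

/-- The positive semidefinite square root of `X * Xᵀ`. -/
def psdSqrtMulT {m k : Type*} [Fintype m] [Fintype k] [DecidableEq m] (X : Matrix m k ℝ) :
    Matrix m m ℝ :=
  ((Matrix.posSemidef_self_mul_conjTranspose X).1.eigenvectorUnitary.1 *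
    diagonal ((RCLike.ofReal : ℝ → ℝ) ∘ (√·) ∘ (Matrix.posSemidef_self_mul_conjTranspose X).1.eigenvalues) *
    (star (Matrix.posSemidef_self_mul_conjTranspose X).1.eigenvectorUnitary : Matrix m m ℝ))

/-- Membership in the orthogonal group `O(d)`. -/
def IsOd (g : Matrix (Fin d) (Fin d) ℝ) : Prop :=
  gᵀ * g = 1 ∧ g * gᵀ = 1

/-- Membership in the special orthogonal group `SO(d)`. -/
def IsSOd (g : Matrix (Fin d) (Fin d) ℝ) : Prop :=
  IsOd g ∧ g.det = 1

/-- The `i`-th `d × d` block of an `nd × d` matrix. -/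
def blk (X : Matrix (Fin n × Fin d) (Fin d) ℝ) (i : Fin n) : Matrix (Fin d) (Fin d) ℝ :=
  Matrix.of fun a b => X (i, a) b

/-- Membership in `O(d)^{⊗n}`: every `d × d` block is orthogonal. -/
def OdN (G : Matrix (Fin n × Fin d) (Fin d) ℝ) : Prop :=
  ∀ i : Fin n, IsOd (blk G i)

/-- Membership in `SO(d)^{⊗n}`. -/
def SOdN (G : Matrix (Fin n × Fin d) (Fin d) ℝ) : Prop :=
  ∀ i : Fin n, IsSOd (blk G i)

/-- The `i`-th block column (an `nd × d` matrix) of an `nd × nd` matrix. -/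
def bcol (M : Matrix (Fin n × Fin d) (Fin n × Fin d) ℝ) (i : Fin n) :
    Matrix (Fin n × Fin d) (Fin d) ℝ :=
  Matrix.of fun p b => M p (i, b)

/-- The `ij`-th `d × d` block of an `nd × nd` matrix. -/
def dblk (M : Matrix (Fin n × Fin d) (Fin n × Fin d) ℝ) (i j : Fin n) :
    Matrix (Fin d) (Fin d) ℝ :=
  Matrix.of fun a b => M (i, a) (j, b)

/-- `G' ∈ T_α(G)` (where `Ct = C + α I`): `G' ∈ O(d)^{⊗n}` and each block `G'_i` is a
nearest point of `C̃ᵢᵀ G` in `O(d)` w.r.t. the Frobenius norm. -/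
def InT (Ct : Matrix (Fin n × Fin d) (Fin n × Fin d) ℝ)
    (G G' : Matrix (Fin n × Fin d) (Fin d) ℝ) : Prop :=
  OdN G' ∧ ∀ i : Fin n, ∀ X : Matrix (Fin d) (Fin d) ℝ, IsOd X →
    frob (blk G' i - (bcol Ct i)ᵀ * G) ≤ frob (X - (bcol Ct i)ᵀ * G)

/-- `G' ∈ ST_α(G)`: the `SO(d)` analogue of `InT`. -/
def InST (Ct : Matrix (Fin n × Fin d) (Fin n × Fin d) ℝ)
    (G G' : Matrix (Fin n × Fin d) (Fin d) ℝ) : Prop :=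
  SOdN G' ∧ ∀ i : Fin n, ∀ X : Matrix (Fin d) (Fin d) ℝ, IsSOd X →
    frob (blk G' i - (bcol Ct i)ᵀ * G) ≤ frob (X - (bcol Ct i)ᵀ * G)

/-- The quotient distance `d(X, Y) = min_{g ∈ O(d)} ‖X − Y g‖_F`. -/
def dOrth (X Y : Matrix (Fin n × Fin d) (Fin d) ℝ) : ℝ :=
  ⨅ g : {g : Matrix (Fin d) (Fin d) ℝ // IsOd g}, frob (X - Y * g.1)

/-- The objective function `f(G) = tr(Gᵀ C G)`. -/
def obj (C : Matrix (Fin n × Fin d) (Fin n × Fin d) ℝ)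
    (G : Matrix (Fin n × Fin d) (Fin d) ℝ) : ℝ :=
  Matrix.trace (Gᵀ * C * G)

/-- Hadamard (entrywise) product. -/
def had {m k : Type*} (X Y : Matrix m k ℝ) : Matrix m k ℝ :=
  Matrix.of fun p q => X p q * Y p q

/-- `W ⊗ (1_d 1_dᵀ)`, the Kronecker product of `W` with the all-ones `d × d` matrix. -/
def kron1 (W : Matrix (Fin n) (Fin n) ℝ) : Matrix (Fin n × Fin d) (Fin n × Fin d) ℝ :=
  Matrix.kroneckerMap (· * ·) W (Matrix.of fun (_ _ : Fin d) => (1 : ℝ))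

/-- The all-ones matrix `1_m 1_mᵀ`. -/
def onesMat (m : Type*) : Matrix m m ℝ :=
  Matrix.of fun _ _ => (1 : ℝ)

/-- `symblockdiag`: symmetrize the diagonal `d × d` blocks, zero out all other blocks. -/
def sbd (X : Matrix (Fin n × Fin d) (Fin n × Fin d) ℝ) :
    Matrix (Fin n × Fin d) (Fin n × Fin d) ℝ :=
  Matrix.of fun p q => if p.1 = q.1 then (X p q + X (p.1, q.2) (q.1, p.2)) / 2 else 0

/-- `S(G) = symblockdiag(C G Gᵀ) − C`. -/
def Smat (C : Matrix (Fin n × Fin d) (Fin n × Fin d) ℝ)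
    (G : Matrix (Fin n × Fin d) (Fin d) ℝ) : Matrix (Fin n × Fin d) (Fin n × Fin d) ℝ :=
  sbd (C * (G * Gᵀ)) - C

/-- `G` is a second-order critical point of (QP): `S(G) G = 0` and
`⟨H, S(G) H⟩ ≥ 0` for all tangent directions `H` (blockwise `Hᵢ Gᵢᵀ` skew-symmetric). -/
def IsSOC (C : Matrix (Fin n × Fin d) (Fin n × Fin d) ℝ)
    (G : Matrix (Fin n × Fin d) (Fin d) ℝ) : Prop :=
  Smat C G * G = 0 ∧
  ∀ H : Matrix (Fin n × Fin d) (Fin d) ℝ,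
    (∀ i : Fin n, (blk H i * (blk G i)ᵀ)ᵀ = -(blk H i * (blk G i)ᵀ)) →
    0 ≤ Matrix.trace (Hᵀ * (Smat C G * H))

/-- Smallest singular value of a square matrix, as the minimum of `‖M v‖` over
unit vectors `v`. -/
def sigmaMin (M : Matrix (Fin d) (Fin d) ℝ) : ℝ :=
  ⨅ v : {v : Fin d → ℝ // ∑ a, (v a) ^ 2 = 1}, Real.sqrt (∑ a, (M.mulVec v.1 a) ^ 2)

/-- The singular values of a square matrix: square roots of the eigenvalues of `Mᵀ M`. -/
def singVal (M : Matrix (Fin d) (Fin d) ℝ) (l : Fin d) : ℝ :=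
  Real.sqrt ((Matrix.isHermitian_conjTranspose_mul_self M).eigenvalues l)

/-- Smallest eigenvalue of a (symmetric) matrix, as the minimum Rayleigh quotient
over unit vectors. -/
def lambdaMin {m : Type*} [Fintype m] (M : Matrix m m ℝ) : ℝ :=
  ⨅ v : {v : m → ℝ // ∑ i, (v i) ^ 2 = 1}, v.1 ⬝ᵥ M.mulVec v.1

/-- `D_α(G)`: block diagonal of the psd square roots of `(C̃ᵢᵀ G)(C̃ᵢᵀ G)ᵀ`, minus `C̃`. -/
def Dmat (Ct : Matrix (Fin n × Fin d) (Fin n × Fin d) ℝ)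
    (G : Matrix (Fin n × Fin d) (Fin d) ℝ) : Matrix (Fin n × Fin d) (Fin n × Fin d) ℝ :=
  (Matrix.of fun p q =>
    if p.1 = q.1 then psdSqrtMulT ((bcol Ct p.1)ᵀ * G) p.2 q.2 else 0) - Ct

/-- The residual function `ρ_α(G) = ‖D_α(G) G‖_F`. -/
def rho (Ct : Matrix (Fin n × Fin d) (Fin n × Fin d) ℝ)
    (G : Matrix (Fin n × Fin d) (Fin d) ℝ) : ℝ :=
  frob (Dmat Ct G * G)

/-- Blockwise infinity norm: `‖X‖_∞ = max_i ‖X_i‖` (spectral norm of the blocks). -/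
def binf (X : Matrix (Fin n × Fin d) (Fin d) ℝ) : ℝ :=
  ⨆ i : Fin n, spec (blk X i)

end GroupSync

namespace Matrix

variable {m : Type*} [Fintype m]

theorem IsHermitian.dotProduct_eigenvectorBasis [DecidableEq m] {M : Matrix m m ℝ}
    (hM : M.IsHermitian) (j k : m) :
    ⇑(hM.eigenvectorBasis j) ⬝ᵥ ⇑(hM.eigenvectorBasis k) = if j = k then 1 else 0 := by
  rw [← orthonormal_iff_ite.mp hM.eigenvectorBasis.orthonormal j k,
    EuclideanSpace.inner_eq_star_dotProduct, star_trivial, dotProduct_comm]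

theorem vecMulVec_sub_vecMulVec_mul_transpose {u v : m → ℝ} (huu : u ⬝ᵥ u = 1)
    (hvv : v ⬝ᵥ v = 1) (huv : u ⬝ᵥ v = 0) :
    (vecMulVec u v - vecMulVec v u) * (vecMulVec u v - vecMulVec v u)ᵀ =
      vecMulVec u u + vecMulVec v v := by
  have hvu : v ⬝ᵥ u = 0 := by rwa [dotProduct_comm]
  simp only [transpose_sub, transpose_vecMulVec, sub_mul, mul_sub, vecMulVec_mul_vecMulVec,
    huu, hvv, huv, hvu, one_smul, zero_smul, vecMulVec_zero]
  abel

theorem IsHermitian.exists_skew_trace_eq_eigenvalues_add [DecidableEq m] {M : Matrix m m ℝ}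
    (hM : M.IsHermitian) {j k : m} (hjk : j ≠ k) :
    ∃ A : Matrix m m ℝ, Aᵀ = -A ∧
      trace (Aᵀ * (M * A)) = hM.eigenvalues j + hM.eigenvalues k := by
  set u : m → ℝ := ⇑(hM.eigenvectorBasis j)
  set v : m → ℝ := ⇑(hM.eigenvectorBasis k)
  have huu : u ⬝ᵥ u = 1 := by simpa using hM.dotProduct_eigenvectorBasis j j
  have hvv : v ⬝ᵥ v = 1 := by simpa using hM.dotProduct_eigenvectorBasis k k
  have huv : u ⬝ᵥ v = 0 := by simpa [hjk] using hM.dotProduct_eigenvectorBasis j k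
  refine ⟨vecMulVec u v - vecMulVec v u, by simp, ?_⟩
  rw [trace_mul_comm, Matrix.mul_assoc, vecMulVec_sub_vecMulVec_mul_transpose huu hvv huv,
    Matrix.mul_add, trace_add, mul_vecMulVec, mul_vecMulVec, trace_vecMulVec, trace_vecMulVec,
    hM.mulVec_eigenvectorBasis, hM.mulVec_eigenvectorBasis, smul_dotProduct, smul_dotProduct,
    huu, hvv, smul_eq_mul, smul_eq_mul, mul_one, mul_one]

end Matrix

namespace GroupSync

variable {n d : ℕ}

def blockIncl (d : ℕ) (i : Fin n) : Matrix (Fin n × Fin d) (Fin d) ℝ :=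
  Matrix.of fun p c => if p = (i, c) then 1 else 0

theorem blk_blockIncl_mul (i i' : Fin n) (K : Matrix (Fin d) (Fin d) ℝ) :
    blk (blockIncl d i * K) i' = if i' = i then K else 0 := by
  ext a b
  by_cases h : i' = i <;> simp [blk, blockIncl, mul_apply, h]

theorem blockIncl_transpose_mul_mul_blockIncl (S : Matrix (Fin n × Fin d) (Fin n × Fin d) ℝ)
    (i : Fin n) : (blockIncl d i)ᵀ * (S * blockIncl d i) = dblk S i i := by
  ext a b
  simp [dblk, blockIncl, mul_apply]

theorem blk_mul (M : Matrix (Fin n × Fin d) (Fin n × Fin d) ℝ)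
    (G : Matrix (Fin n × Fin d) (Fin d) ℝ) (i : Fin n) :
    blk (M * G) i = (bcol Mᵀ i)ᵀ * G := by
  ext a b
  simp [blk, bcol, mul_apply]

theorem blk_sbd_mul (X : Matrix (Fin n × Fin d) (Fin n × Fin d) ℝ)
    (G : Matrix (Fin n × Fin d) (Fin d) ℝ) (i : Fin n) :
    blk (sbd X * G) i = dblk (sbd X) i i * blk G i := by
  ext a b
  simp [blk, dblk, sbd, mul_apply, Fintype.sum_prod_type]

theorem dblk_sbd_transpose (X : Matrix (Fin n × Fin d) (Fin n × Fin d) ℝ) (i : Fin n) :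
    (dblk (sbd X) i i)ᵀ = dblk (sbd X) i i := by
  ext a b
  simp only [dblk, sbd, transpose_apply, of_apply, if_true]
  ring

theorem isHermitian_dblk_smat {C : Matrix (Fin n × Fin d) (Fin n × Fin d) ℝ} (hC : Cᵀ = C)
    (G : Matrix (Fin n × Fin d) (Fin d) ℝ) (i : Fin n) : (dblk (Smat C G) i i).IsHermitian := by
  have hCii : (dblk C i i)ᵀ = dblk C i i := by
    ext a b
    exact congrFun (congrFun hC (i, a)) (i, b)
  exact (isHermitian_iff_isSymm.mpr (dblk_sbd_transpose (C * (G * Gᵀ)) i)).sub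
    (isHermitian_iff_isSymm.mpr hCii)

variable {C : Matrix (Fin n × Fin d) (Fin n × Fin d) ℝ} {G : Matrix (Fin n × Fin d) (Fin d) ℝ}

theorem dblk_smat_eq (hC : Cᵀ = C) (hS : Smat C G * G = 0) {i : Fin n}
    (hGi : blk G i * (blk G i)ᵀ = 1) :
    dblk (Smat C G) i i = (bcol C i)ᵀ * G * (blk G i)ᵀ - dblk C i i := by
  have hfirst : dblk (sbd (C * (G * Gᵀ))) i i * blk G i = (bcol C i)ᵀ * G := by
    have h : blk (sbd (C * (G * Gᵀ)) * G) i - blk (C * G) i = 0 := by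
      rw [Smat, Matrix.sub_mul] at hS
      ext a b
      exact congrFun (congrFun hS (i, a)) b
    rwa [blk_sbd_mul, blk_mul, hC, sub_eq_zero] at h
  calc dblk (Smat C G) i i = dblk (sbd (C * (G * Gᵀ))) i i - dblk C i i := rfl
    _ = dblk (sbd (C * (G * Gᵀ))) i i * (blk G i * (blk G i)ᵀ) - dblk C i i := by
      rw [hGi, Matrix.mul_one]
    _ = (bcol C i)ᵀ * G * (blk G i)ᵀ - dblk C i i := by rw [← Matrix.mul_assoc, hfirst]

theorem IsSOC.trace_nonneg_of_skew (hsoc : IsSOC C G) {i : Fin n}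
    (hGi : blk G i * (blk G i)ᵀ = 1) {A : Matrix (Fin d) (Fin d) ℝ} (hA : Aᵀ = -A) :
    0 ≤ trace (Aᵀ * (dblk (Smat C G) i i * A)) := by
  set H : Matrix (Fin n × Fin d) (Fin d) ℝ := blockIncl d i * (A * blk G i)
  have htangent : ∀ i' : Fin n, (blk H i' * (blk G i')ᵀ)ᵀ = -(blk H i' * (blk G i')ᵀ) := by
    intro i'
    by_cases h : i' = i
    · subst h
      rw [blk_blockIncl_mul, if_pos rfl, Matrix.mul_assoc, hGi, Matrix.mul_one, hA]
    · simp [H, blk_blockIncl_mul, h]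
  have htrace : trace (Hᵀ * (Smat C G * H)) = trace (Aᵀ * (dblk (Smat C G) i i * A)) :=
    calc trace (Hᵀ * (Smat C G * H))
        = trace ((A * blk G i)ᵀ * ((blockIncl d i)ᵀ * (Smat C G * blockIncl d i)) *
            (A * blk G i)) := by simp only [H, transpose_mul, Matrix.mul_assoc]
      _ = trace ((blk G i)ᵀ * (Aᵀ * (dblk (Smat C G) i i * A) * blk G i)) := by
        simp only [blockIncl_transpose_mul_mul_blockIncl, transpose_mul, Matrix.mul_assoc]
      _ = trace (Aᵀ * (dblk (Smat C G) i i * A) * (blk G i * (blk G i)ᵀ)) := by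
        rw [trace_mul_comm, Matrix.mul_assoc]
      _ = trace (Aᵀ * (dblk (Smat C G) i i * A)) := by rw [hGi, Matrix.mul_one]
  exact htrace ▸ hsoc.2 H htangent

theorem second_order_critical_eigenvalue_sum_general {n d : ℕ}
    (C : Matrix (Fin n × Fin d) (Fin n × Fin d) ℝ) (hCsymm : Cᵀ = C)
    (G : Matrix (Fin n × Fin d) (Fin d) ℝ) (hG : OdN G)
    (hsoc : IsSOC C G) :
    ∀ i : Fin n,
      ∃ hM : ((bcol C i)ᵀ * G * (blk G i)ᵀ - dblk C i i).IsHermitian,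
        ∀ j k : Fin d, j ≠ k → 0 ≤ hM.eigenvalues j + hM.eigenvalues k := by
  intro i
  have hGi : blk G i * (blk G i)ᵀ = 1 := (hG i).2
  have hblock := dblk_smat_eq hCsymm hsoc.1 hGi
  have hM := hblock ▸ isHermitian_dblk_smat hCsymm G i
  refine ⟨hM, fun j k hjk => ?_⟩
  obtain ⟨A, hA, htrace⟩ := hM.exists_skew_trace_eq_eigenvalues_add hjk
  have hnonneg := hsoc.trace_nonneg_of_skew hGi hA
  rw [hblock] at hnonneg
  linarith

/-- eigenvalue property of second-order critical points.
Let `d ≥ 2`, `C` symmetric, and let `G ∈ O(d)^{⊗n}` be a second-order critical point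
of (QP). Then for each `i`, the matrix `Cᵢᵀ G Gᵢᵀ − C_{ii}` is symmetric and the sum of
its two smallest eigenvalues is nonnegative (equivalently, the sum of any two of its
eigenvalues, counted with multiplicity, is nonnegative). -/
theorem second_order_critical_eigenvalue_sum {n d : ℕ} (hd : 2 ≤ d)
    (C : Matrix (Fin n × Fin d) (Fin n × Fin d) ℝ) (hCsymm : Cᵀ = C)
    (G : Matrix (Fin n × Fin d) (Fin d) ℝ) (hG : OdN G)
    (hsoc : IsSOC C G) :
    ∀ i : Fin n,
      ∃ hM : ((bcol C i)ᵀ * G * (blk G i)ᵀ - dblk C i i).IsHermitian,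
        ∀ j k : Fin d, j ≠ k → 0 ≤ hM.eigenvalues j + hM.eigenvalues k :=
  second_order_critical_eigenvalue_sum_general C hCsymm G hG hsoc

end GroupSync
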